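/- arXiv:1502.01040 — 2 statements merged into one kernel-verified Lean document; each statement's English description precedes it below -/
import Mathlib

section
/- For every integer n ≥ 1, the kernel of the ℂ-algebra homomorphism φ : ℂ[Z₁, Z₂, W] → ℂ[x₁, y₁, …, y_n, x_n] determined by Z₁ ↦ x_n^{n+1} ∏_{j=1}^{n} y_j^{j}, Z₂ ↦ x₁^{n+1} ∏_{j=1}^{n} y_j^{n+1−j}, W ↦ x₁ x_n ∏_{j=1}^{n} y_j is the principal ideal generated by Z₁Z₂ − W^{n+1}. Consequently, the invariant ring of the torus action is isomorphic to ℂ[Z₁, Z₂, W]/(Z₁Z₂ − W^{n+1}), the coordinate ring of the A_n singularity {xy = z^{n+1}}. -/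
open MvPolynomial

/-- The subalgebra of an `Fin n`-multigraded polynomial ring consisting of the polynomials
all of whose monomials have weight zero (the ring of invariants of the torus action
with weights `w`). -/
noncomputable def invariants {m n : ℕ} (w : Fin m → Fin n → ℤ) :
    Subalgebra ℂ (MvPolynomial (Fin m) ℂ) where
  carrier := {p | ∀ d ∈ p.support, ∀ i : Fin n, ∑ v, (d v : ℤ) * w v i = 0}
  zero_mem' := by
    intro d hd i
    simp at hd
  one_mem' := by
    intro d hd i
    have hd' : d = 0 := by
      by_contra h
      have := MvPolynomial.mem_support_iff.mp hd
      rw [show (1 : MvPolynomial (Fin m) ℂ) = C 1 from (map_one C).symm,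
        MvPolynomial.coeff_C, if_neg (Ne.symm h)] at this
      exact this rfl
    subst hd'
    simp
  add_mem' := by
    intro p q hp hq d hd i
    rcases Finset.mem_union.mp (MvPolynomial.support_add hd) with h | h
    · exact hp d h i
    · exact hq d h i
  mul_mem' := by
    intro p q hp hq d hd i
    obtain ⟨a, ha, b, hb, rfl⟩ := Finset.mem_add.mp (MvPolynomial.support_mul p q hd)
    have key : ∀ v : Fin m, (((a + b) v : ℤ)) * w v i
        = (a v : ℤ) * w v i + (b v : ℤ) * w v i := by
      intro v
      rw [Finsupp.add_apply]
      push_cast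
      ring
    rw [Finset.sum_congr rfl fun v _ => key v, Finset.sum_add_distrib,
      hp a ha i, hq b hb i, add_zero]
  algebraMap_mem' := by
    intro r d hd i
    have hd' : d = 0 := by
      by_contra h
      have := MvPolynomial.mem_support_iff.mp hd
      rw [MvPolynomial.algebraMap_eq, MvPolynomial.coeff_C, if_neg (Ne.symm h)] at this
      exact this rfl
    subst hd'
    simp

/-- Weights of the torus action for the `A_n` singularity: the variables of
`ℂ[x₁, y₁, …, y_n, x_n]` are indexed by `Fin (n+2)` with `0 ↦ x₁`, `j ↦ y_j`
for `1 ≤ j ≤ n` and `n+1 ↦ x_n`; the coordinate `i : Fin n` corresponds to the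
basis vector `e_{i+1}` of `ℤⁿ`. -/
def wA (n : ℕ) (v : Fin (n + 2)) (i : Fin n) : ℤ :=
  if (v : ℕ) = 0 then (if (i : ℕ) = 0 then 1 else 0)
  else if (v : ℕ) = n + 1 then (if (i : ℕ) = n - 1 then 1 else 0)
  else (if (i : ℕ) + 1 = (v : ℕ) - 1 then 1 else 0)
    + (if (i : ℕ) + 1 = (v : ℕ) then -2 else 0)
    + (if (i : ℕ) + 1 = (v : ℕ) + 1 then 1 else 0)

/-- The variable of index `a` in `ℂ[x₁, y₁, …, y_n, x_n]` (indices as in `wA`). -/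
noncomputable def vA (n : ℕ) (a : ℕ) : MvPolynomial (Fin (n + 2)) ℂ :=
  MvPolynomial.X ⟨a % (n + 2), Nat.mod_lt a (by omega)⟩

/-!
`Z₁, Z₂, W` go to monomials, so `Z₁^a Z₂^b W^c` goes to the monomial with exponent vector
`v ↦ a v + b (n + 1 - v) + c`. The weight-zero exponent vectors are exactly the arithmetic
progressions of naturals indexed by `0, …, n + 1`, and every such progression has this form
(`a` or `b` is its slope, according to its sign), so the image is the invariant ring.

Modulo `Z₁Z₂ - W^{n+1}` every monomial is congruent to one with `c ≤ n`. On these the exponent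
map is injective: `c` and `b` are the remainder and the quotient of the first coordinate by
`n + 1`, and `a` is the quotient of the last one. Hence an element of the kernel is congruent to
a combination of monomials with distinct images that maps to zero, i.e. to zero. The isomorphism
is the first isomorphism theorem.
-/

namespace MvPolynomial

variable {R σ τ : Type*} [CommRing R]

theorem aeval_monomial_monomial_one (e : σ → τ →₀ ℕ) (d : σ →₀ ℕ) (r : R) :
    aeval (fun i => monomial (e i) (1 : R)) (monomial d r) =
      monomial (Finsupp.linearCombination ℕ e d) r := by
  rw [aeval_monomial, Finsupp.linearCombination_apply, monomial_finsupp_sum_index, algebraMap_eq]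
  simp only [monomial_pow, one_pow]

theorem aeval_monomial_one_eq_sum (e : σ → τ →₀ ℕ) (p : MvPolynomial σ R) :
    aeval (fun i => monomial (e i) (1 : R)) p =
      ∑ d ∈ p.support, monomial (Finsupp.linearCombination ℕ e d) (coeff d p) := by
  conv_lhs => rw [p.as_sum]
  simp only [map_sum, aeval_monomial_monomial_one]

theorem support_aeval_monomial_one_subset (e : σ → τ →₀ ℕ) (p : MvPolynomial σ R) :
    ↑(aeval (fun i => monomial (e i) (1 : R)) p).support ⊆
      Finsupp.linearCombination ℕ e '' p.support := by
  classical
  intro d hd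
  rw [aeval_monomial_one_eq_sum] at hd
  obtain ⟨d', hd', hd⟩ := Finset.mem_biUnion.mp (support_sum hd)
  exact ⟨d', hd', (Finset.mem_singleton.mp (support_monomial_subset hd)).symm⟩

theorem coeff_aeval_monomial_one_of_injOn (e : σ → τ →₀ ℕ) {p : MvPolynomial σ R}
    (hE : Set.InjOn (Finsupp.linearCombination ℕ e) p.support) {d : σ →₀ ℕ}
    (hd : d ∈ p.support) :
    coeff (Finsupp.linearCombination ℕ e d) (aeval (fun i => monomial (e i) (1 : R)) p) =
      coeff d p := by
  classical
  rw [aeval_monomial_one_eq_sum, coeff_sum, Finset.sum_eq_single_of_mem d hd, coeff_monomial,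
    if_pos rfl]
  intro d' hd' hne
  rw [coeff_monomial, if_neg fun h => hne (hE hd' hd h)]

theorem eq_zero_of_aeval_monomial_one_eq_zero (e : σ → τ →₀ ℕ) {p : MvPolynomial σ R}
    (hE : Set.InjOn (Finsupp.linearCombination ℕ e) p.support)
    (hp : aeval (fun i => monomial (e i) (1 : R)) p = 0) : p = 0 := by
  by_contra hne
  obtain ⟨d, hd⟩ := support_nonempty.mpr hne
  have := coeff_aeval_monomial_one_of_injOn e hE hd
  rw [hp, coeff_zero] at this
  exact mem_support_iff.mp hd this.symm

theorem monomial_add_smul_sub_mem {I : Ideal (MvPolynomial σ R)} {α β : σ →₀ ℕ}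
    (h : monomial α (1 : R) - monomial β 1 ∈ I) (u : σ →₀ ℕ) (k : ℕ) :
    monomial (u + k • α) (1 : R) - monomial (u + k • β) 1 ∈ I := by
  have factor (γ : σ →₀ ℕ) : monomial (u + k • γ) (1 : R) = monomial u 1 * monomial γ 1 ^ k := by
    rw [monomial_pow, monomial_mul, one_pow, mul_one]
  rw [← Ideal.Quotient.eq] at h ⊢
  rw [factor, factor, map_mul, map_mul, map_pow, map_pow, h]

theorem ker_aeval_monomial_one_eq (e : σ → τ →₀ ℕ) {I : Ideal (MvPolynomial σ R)}
    (hI : I ≤ RingHom.ker (aeval (fun i => monomial (e i) (1 : R)))) {N : Set (σ →₀ ℕ)}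
    (hinj : Set.InjOn (Finsupp.linearCombination ℕ e) N)
    (hN : ∀ d, ∃ d' ∈ N, monomial d (1 : R) - monomial d' 1 ∈ I) :
    RingHom.ker (aeval (fun i => monomial (e i) (1 : R))) = I := by
  refine le_antisymm (fun f hf => ?_) hI
  choose ρ hρN hρ using hN
  set g := ∑ d ∈ f.support, monomial (ρ d) (coeff d f)
  have hfg : f - g ∈ I := by
    have : f - g = ∑ d ∈ f.support, C (coeff d f) * (monomial d 1 - monomial (ρ d) 1) := by
      conv_lhs => rw [f.as_sum]
      simp only [g, ← Finset.sum_sub_distrib, mul_sub, C_mul_monomial, mul_one]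
    rw [this]
    exact I.sum_mem fun d _ => I.mul_mem_left _ (hρ d)
  have hg : aeval (fun i => monomial (e i) (1 : R)) g = 0 := by
    have := hI hfg
    rwa [RingHom.mem_ker, map_sub, RingHom.mem_ker.mp hf, zero_sub, neg_eq_zero] at this
  have hgN : ↑g.support ⊆ N := by
    classical
    intro d hd
    obtain ⟨d', -, hd⟩ := Finset.mem_biUnion.mp (support_sum hd)
    rw [Finset.mem_singleton.mp (support_monomial_subset hd)]
    exact hρN d'
  have := eq_zero_of_aeval_monomial_one_eq_zero e (hinj.mono hgN) hg
  rwa [this, sub_zero] at hfg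

theorem mem_range_aeval_monomial_one_iff (e : σ → τ →₀ ℕ) (p : MvPolynomial τ R) :
    p ∈ (aeval (R := R) fun i => monomial (e i) (1 : R)).range ↔
      ∀ d ∈ p.support, d ∈ Set.range (Finsupp.linearCombination ℕ e) := by
  constructor
  · rintro ⟨q, rfl⟩ d hd
    obtain ⟨d', -, rfl⟩ := support_aeval_monomial_one_subset e q hd
    exact ⟨d', rfl⟩
  · intro h
    rw [p.as_sum]
    refine Subalgebra.sum_mem _ fun d hd => ?_
    obtain ⟨d', rfl⟩ := h d hd
    exact ⟨monomial d' _, aeval_monomial_monomial_one e d' _⟩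

end MvPolynomial

theorem range_aeval_monomial_one_eq_invariants {m k : ℕ} {σ : Type*} (e : σ → Fin m →₀ ℕ)
    (w : Fin m → Fin k → ℤ)
    (hw : ∀ d : Fin m →₀ ℕ,
      (∀ i, ∑ v, (d v : ℤ) * w v i = 0) ↔ d ∈ Set.range (Finsupp.linearCombination ℕ e)) :
    (aeval (R := ℂ) fun i => monomial (e i) (1 : ℂ)).range = invariants w := by
  ext p
  rw [mem_range_aeval_monomial_one_iff]
  exact forall₂_congr fun d _ => (hw d).symm

noncomputable def anExponent (n : ℕ) : Fin 3 → Fin (n + 2) →₀ ℕ :=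
  ![Finsupp.equivFunOnFinite.symm fun v => v, Finsupp.equivFunOnFinite.symm fun v => n + 1 - v,
    Finsupp.equivFunOnFinite.symm fun _ => 1]

theorem linearCombination_anExponent_apply (n : ℕ) (d : Fin 3 →₀ ℕ) (v : Fin (n + 2)) :
    Finsupp.linearCombination ℕ (anExponent n) d v = d 0 * v + d 1 * (n + 1 - v) + d 2 := by
  rw [Finsupp.linearCombination_apply, Finsupp.sum_fintype _ _ (by simp), Finsupp.finsetSum_apply,
    Fin.sum_univ_three]
  simp [anExponent, mul_comm]

theorem vA_val (n : ℕ) (v : Fin (n + 2)) : vA n v = X v := by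
  simp [vA, Nat.mod_eq_of_lt v.isLt]

theorem monomial_equivFunOnFinite_symm_eq_prod_vA (n : ℕ) (k : ℕ → ℕ) :
    monomial (Finsupp.equivFunOnFinite.symm fun v : Fin (n + 2) => k v) (1 : ℂ) =
      vA n 0 ^ k 0 * (∏ j ∈ Finset.Icc 1 n, vA n j ^ k j) * vA n (n + 1) ^ k (n + 1) := by
  rw [monomial_eq, C_1, one_mul, Finsupp.prod_fintype _ _ fun _ => pow_zero _]
  simp only [Finsupp.coe_equivFunOnFinite_symm, ← vA_val]
  rw [Fin.prod_univ_eq_prod_range (fun j => vA n j ^ k j), Finset.prod_range_succ,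
    Finset.range_eq_Ico, Finset.prod_eq_prod_Ico_succ_bot (Nat.succ_pos n),
    zero_add, Nat.succ_eq_add_one, Finset.Ico_add_one_right_eq_Icc]

theorem generators_eq_monomial_anExponent (n : ℕ) :
    ![vA n (n + 1) ^ (n + 1) * ∏ j ∈ Finset.Icc 1 n, vA n j ^ j,
        vA n 0 ^ (n + 1) * ∏ j ∈ Finset.Icc 1 n, vA n j ^ (n + 1 - j),
        vA n 0 * vA n (n + 1) * ∏ j ∈ Finset.Icc 1 n, vA n j] =
      fun i => monomial (anExponent n i) (1 : ℂ) := by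
  funext i
  fin_cases i
  · simpa [anExponent, mul_comm] using (monomial_equivFunOnFinite_symm_eq_prod_vA n fun j => j).symm
  · simpa [anExponent] using (monomial_equivFunOnFinite_symm_eq_prod_vA n fun j => n + 1 - j).symm
  · simpa [anExponent, mul_right_comm] using (monomial_equivFunOnFinite_symm_eq_prod_vA n fun _ => 1).symm

theorem eq_add_mul_of_sub_two_mul_add_eq_zero {R : Type*} [CommRing R] {u : ℕ → R} {N : ℕ}
    (h : ∀ i, i + 2 ≤ N → u i - 2 * u (i + 1) + u (i + 2) = 0) {k : ℕ} (hk : k ≤ N) :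
    u k = u 0 + k * (u 1 - u 0) := by
  have hstep : ∀ i, i + 1 ≤ N → u (i + 1) - u i = u 1 - u 0 := by
    intro i hi
    induction i with
    | zero => rfl
    | succ i ih => linear_combination h i (by omega) + ih (by omega)
  induction k with
  | zero => simp
  | succ k ih =>
    push_cast
    linear_combination ih (by omega) + hstep k hk

section

open Fin.NatCast

theorem wA_eq_ite (n : ℕ) (v : Fin (n + 2)) (i : Fin n) :
    wA n v i = (if v = (i.val : Fin (n + 2)) then 1 else 0)
      - 2 * (if v = ((i.val + 1 : ℕ) : Fin (n + 2)) then 1 else 0)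
      + (if v = ((i.val + 2 : ℕ) : Fin (n + 2)) then 1 else 0) := by
  have := v.isLt
  have := i.isLt
  simp only [wA, Fin.ext_iff, Fin.val_natCast]
  rw [Nat.mod_eq_of_lt (by omega), Nat.mod_eq_of_lt (by omega), Nat.mod_eq_of_lt (by omega)]
  split_ifs <;> omega

theorem sum_mul_wA (n : ℕ) (d : Fin (n + 2) → ℕ) (i : Fin n) :
    ∑ v, (d v : ℤ) * wA n v i = (d (i.val : Fin (n + 2)) : ℤ)
      - 2 * d ((i.val + 1 : ℕ) : Fin (n + 2)) + d ((i.val + 2 : ℕ) : Fin (n + 2)) := by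
  simp [wA_eq_ite, mul_add, mul_sub, Finset.sum_add_distrib, Finset.sum_sub_distrib,
    mul_comm]

theorem sum_mul_wA_eq_zero_iff (n : ℕ) (d : Fin (n + 2) →₀ ℕ) :
    (∀ i : Fin n, ∑ v, (d v : ℤ) * wA n v i = 0) ↔
      d ∈ Set.range (Finsupp.linearCombination ℕ (anExponent n)) := by
  constructor
  · intro h
    set u : ℕ → ℤ := fun k => d k
    have hu : ∀ v : Fin (n + 2), (d v : ℤ) = u 0 + v * (u 1 - u 0) := by
      intro v
      rw [← eq_add_mul_of_sub_two_mul_add_eq_zero (N := n + 1) _ (by omega)]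
      · simp [u]
      · intro i hi
        simpa [u, sum_mul_wA] using h ⟨i, by omega⟩
    have hfirst : (d 0 : ℤ) = u 0 := by simpa using hu 0
    have hlast : (d (Fin.last _) : ℤ) = u 0 + (n + 1) * (u 1 - u 0) := by
      simpa using hu (Fin.last _)
    rcases le_total 0 (u 1 - u 0) with hs | hs
    · obtain ⟨s, hs⟩ := Int.eq_ofNat_of_zero_le hs
      refine ⟨Finsupp.equivFunOnFinite.symm ![s, 0, d 0], ?_⟩
      ext v
      rw [linearCombination_anExponent_apply]
      zify
      simp only [Finsupp.equivFunOnFinite_symm_apply_apply, Matrix.cons_val_zero,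
        Matrix.cons_val_one, CharP.cast_eq_zero, zero_mul, add_zero, Matrix.cons_val]
      linear_combination hfirst - hu v - (v : ℤ) * hs
    · obtain ⟨s, hs⟩ := Int.eq_ofNat_of_zero_le (sub_nonneg.mpr hs)
      refine ⟨Finsupp.equivFunOnFinite.symm ![0, s, d (Fin.last _)], ?_⟩
      ext v
      rw [linearCombination_anExponent_apply]
      zify [(by omega : (v : ℕ) ≤ n + 1)]
      simp only [Finsupp.equivFunOnFinite_symm_apply_apply, Matrix.cons_val_zero,
        CharP.cast_eq_zero, zero_mul, Matrix.cons_val_one, zero_add, Matrix.cons_val]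
      linear_combination hlast - hu v - ((n : ℤ) + 1 - v) * hs
  · rintro ⟨a, rfl⟩ i
    have hval (k : ℕ) (hk : k ≤ n + 1) :
        (Finsupp.linearCombination ℕ (anExponent n) a k : ℤ) =
          a 0 * k + a 1 * ((n : ℤ) + 1 - k) + a 2 := by
      rw [linearCombination_anExponent_apply, Fin.val_natCast, Nat.mod_eq_of_lt (by omega)]
      push_cast [hk]
      ring
    rw [sum_mul_wA, hval _ (by omega), hval _ (by omega), hval _ (by omega)]
    push_cast
    ring

end

theorem injOn_linearCombination_anExponent (n : ℕ) :
    Set.InjOn (Finsupp.linearCombination ℕ (anExponent n)) {d | d 2 ≤ n} := by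
  have recover (d : Fin 3 →₀ ℕ) (hd : d 2 ≤ n) :
      Finsupp.linearCombination ℕ (anExponent n) d 0 % (n + 1) = d 2 ∧
      Finsupp.linearCombination ℕ (anExponent n) d 0 / (n + 1) = d 1 ∧
      Finsupp.linearCombination ℕ (anExponent n) d (Fin.last _) / (n + 1) = d 0 := by
    have hlt : d 2 < n + 1 := Nat.lt_succ_of_le hd
    have h0 : Finsupp.linearCombination ℕ (anExponent n) d 0 = (n + 1) * d 1 + d 2 := by
      simp [linearCombination_anExponent_apply, mul_comm]
    have hl : Finsupp.linearCombination ℕ (anExponent n) d (Fin.last _) = (n + 1) * d 0 + d 2 := by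
      simp [linearCombination_anExponent_apply, mul_comm]
    rw [h0, hl, Nat.mul_add_mod, Nat.mod_eq_of_lt hlt, Nat.mul_add_div n.succ_pos,
      Nat.mul_add_div n.succ_pos, Nat.div_eq_of_lt hlt]
    simp
  intro d hd d' hd' h
  obtain ⟨h2, h1, h0⟩ := recover d hd
  obtain ⟨h2', h1', h0'⟩ := recover d' hd'
  ext i
  fin_cases i
  · exact h0.symm.trans (h ▸ h0')
  · exact h1.symm.trans (h ▸ h1')
  · exact h2.symm.trans (h ▸ h2')

theorem exists_le_monomial_sub_mem_span (n : ℕ) (d : Fin 3 →₀ ℕ) :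
    ∃ d' ∈ {d : Fin 3 →₀ ℕ | d 2 ≤ n}, monomial d (1 : ℂ) - monomial d' 1 ∈
      Ideal.span {X 0 * X 1 - X 2 ^ (n + 1)} := by
  set u := d.update 2 (d 2 % (n + 1))
  have hd : d = u + (d 2 / (n + 1)) • Finsupp.single 2 (n + 1) := by
    ext i
    fin_cases i <;> simp [u]
    linarith [Nat.mod_add_div (d 2) (n + 1)]
  have hrel : monomial (Finsupp.single (2 : Fin 3) (n + 1)) (1 : ℂ) -
      monomial (Finsupp.single 0 1 + Finsupp.single 1 1) 1 ∈
        Ideal.span {X 0 * X 1 - X 2 ^ (n + 1)} := by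
    have hgen : (X 0 * X 1 - X 2 ^ (n + 1) : MvPolynomial (Fin 3) ℂ) =
        monomial (Finsupp.single 0 1 + Finsupp.single 1 1) 1 -
          monomial (Finsupp.single 2 (n + 1)) 1 := by
      rw [X_pow_eq_monomial, X, X, monomial_mul, one_mul]
    rw [hgen, ← neg_sub (monomial (Finsupp.single 0 1 + Finsupp.single 1 1) (1 : ℂ))]
    exact neg_mem (Ideal.subset_span rfl)
  have key := monomial_add_smul_sub_mem hrel u (d 2 / (n + 1))
  rw [← hd] at key
  exact ⟨_, by simp [u, Nat.lt_succ_iff.mp (Nat.mod_lt _ n.succ_pos)], key⟩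

theorem span_le_ker_aeval_anExponent (n : ℕ) :
    (Ideal.span {X 0 * X 1 - X 2 ^ (n + 1)} : Ideal (MvPolynomial (Fin 3) ℂ)) ≤
      RingHom.ker (aeval (R := ℂ) fun i => monomial (anExponent n i) (1 : ℂ)) := by
  rw [Ideal.span_le, Set.singleton_subset_iff, SetLike.mem_coe, RingHom.mem_ker]
  simp only [map_sub, map_mul, map_pow, aeval_X, monomial_mul, monomial_pow, one_pow, mul_one,
    sub_eq_zero]
  rw [show anExponent n 0 + anExponent n 1 = (n + 1) • anExponent n 2 by
    ext v
    simp [anExponent]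
    omega]

theorem statement1_general (n : ℕ) :
    RingHom.ker
        (MvPolynomial.aeval
          ![vA n (n + 1) ^ (n + 1) * ∏ j ∈ Finset.Icc 1 n, vA n j ^ j,
            vA n 0 ^ (n + 1) * ∏ j ∈ Finset.Icc 1 n, vA n j ^ (n + 1 - j),
            vA n 0 * vA n (n + 1) * ∏ j ∈ Finset.Icc 1 n, vA n j] :
          MvPolynomial (Fin 3) ℂ →ₐ[ℂ] MvPolynomial (Fin (n + 2)) ℂ)
      = (Ideal.span {MvPolynomial.X 0 * MvPolynomial.X 1 - MvPolynomial.X 2 ^ (n + 1)} :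
          Ideal (MvPolynomial (Fin 3) ℂ)) ∧
    Nonempty
      ((MvPolynomial (Fin 3) ℂ ⧸
          (Ideal.span {MvPolynomial.X 0 * MvPolynomial.X 1 - MvPolynomial.X 2 ^ (n + 1)} :
            Ideal (MvPolynomial (Fin 3) ℂ)))
        ≃ₐ[ℂ] invariants (wA n)) := by
  rw [generators_eq_monomial_anExponent]
  have hker := ker_aeval_monomial_one_eq _ (span_le_ker_aeval_anExponent n)
    (injOn_linearCombination_anExponent n) (exists_le_monomial_sub_mem_span n)
  have hrange := range_aeval_monomial_one_eq_invariants _ _ (sum_mul_wA_eq_zero_iff n)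
  exact ⟨hker, ⟨(Ideal.quotientEquivAlgOfEq ℂ hker.symm).trans
    ((Ideal.quotientKerEquivRange _).trans (Subalgebra.equivOfEq _ _ hrange))⟩⟩

/-- the kernel of `φ : ℂ[Z₁,Z₂,W] → ℂ[x₁,y₁,…,y_n,x_n]`,
`Z₁ ↦ x_n^{n+1} ∏ y_j^j`, `Z₂ ↦ x₁^{n+1} ∏ y_j^{n+1-j}`, `W ↦ x₁ x_n ∏ y_j`, is the
principal ideal `(Z₁Z₂ - W^{n+1})`; consequently the invariant ring of the torus
action is isomorphic to `ℂ[Z₁,Z₂,W]/(Z₁Z₂ - W^{n+1})`, the coordinate ring of the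
`A_n` singularity `{xy = z^{n+1}}`. -/
theorem statement1 (n : ℕ) (hn : 1 ≤ n) :
    RingHom.ker
        (MvPolynomial.aeval
          ![vA n (n + 1) ^ (n + 1) * ∏ j ∈ Finset.Icc 1 n, vA n j ^ j,
            vA n 0 ^ (n + 1) * ∏ j ∈ Finset.Icc 1 n, vA n j ^ (n + 1 - j),
            vA n 0 * vA n (n + 1) * ∏ j ∈ Finset.Icc 1 n, vA n j] :
          MvPolynomial (Fin 3) ℂ →ₐ[ℂ] MvPolynomial (Fin (n + 2)) ℂ)
      = (Ideal.span {MvPolynomial.X 0 * MvPolynomial.X 1 - MvPolynomial.X 2 ^ (n + 1)} :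
          Ideal (MvPolynomial (Fin 3) ℂ)) ∧
    Nonempty
      ((MvPolynomial (Fin 3) ℂ ⧸
          (Ideal.span {MvPolynomial.X 0 * MvPolynomial.X 1 - MvPolynomial.X 2 ^ (n + 1)} :
            Ideal (MvPolynomial (Fin 3) ℂ)))
        ≃ₐ[ℂ] invariants (wA n)) :=
  statement1_general n
end

section
/- Let k ≥ 2 and n = 2k. The invariant ring Sᵀ (the ℂ-subalgebra of S = ℂ[x₁, x₂, x_{2k−1}, y₀, y₁, …, y_{2k−1}] consisting of all polynomials each of whose monomials has ℤ^{2k}-weight 0) equals the ℂ-subalgebra generated by the four monomials Z₁ = x₁² y₀^{2k−2} y₁^{k} y₂^{k−1} ∏_{j=3}^{2k−1} y_j^{2k−j}, Z₂ = x₂² y₀^{2k−2} y₁^{k−1} y₂^{k} ∏_{j=3}^{2k−1} y_j^{2k−j}, Z₃ = x_{2k−1}² y₀² y₁ y₂ ∏_{j=3}^{2k−1} y_j², and W = x₁ x₂ x_{2k−1} y₀^{2k−1} y₁^{k} y₂^{k} ∏_{j=3}^{2k−1} y_j^{2k+1−j}. -/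
open MvPolynomial

/-- Weights of the torus action for the `D_n` singularity: the variables of
`S = ℂ[x₁, x₂, x_{n-1}, y₀, y₁, …, y_{n-1}]` are indexed by `Fin (n+3)` with
`0 ↦ x₁`, `1 ↦ x₂`, `2 ↦ x_{n-1}` and `3+m ↦ y_m`; the coordinate `i : Fin n`
corresponds to the basis vector `e_i` of `ℤⁿ`.  Thus `w(x₁) = e₁`, `w(x₂) = e₂`,
`w(x_{n-1}) = e_{n-1}`, `w(y₀) = -2e₀+e₁+e₂+e₃`, `w(y₁) = e₀-2e₁`, `w(y₂) = e₀-2e₂`,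
`w(y₃) = e₀-2e₃+e₄`, `w(y_m) = e_{m-1}-2e_m+e_{m+1}` for `4 ≤ m ≤ n-2` and
`w(y_{n-1}) = e_{n-2}-2e_{n-1}`. -/
def wD (n : ℕ) (v : Fin (n + 3)) (i : Fin n) : ℤ :=
  if (v : ℕ) = 0 then (if (i : ℕ) = 1 then 1 else 0)
  else if (v : ℕ) = 1 then (if (i : ℕ) = 2 then 1 else 0)
  else if (v : ℕ) = 2 then (if (i : ℕ) = n - 1 then 1 else 0)
  else if (v : ℕ) = 3 then
    (if (i : ℕ) = 0 then -2 else if (i : ℕ) = 1 ∨ (i : ℕ) = 2 ∨ (i : ℕ) = 3 then 1 else 0)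
  else if (v : ℕ) = 4 then (if (i : ℕ) = 0 then 1 else if (i : ℕ) = 1 then -2 else 0)
  else if (v : ℕ) = 5 then (if (i : ℕ) = 0 then 1 else if (i : ℕ) = 2 then -2 else 0)
  else if (v : ℕ) = 6 then
    (if (i : ℕ) = 0 then 1 else 0) + (if (i : ℕ) = 3 then -2 else 0)
      + (if (i : ℕ) = 4 then 1 else 0)
  else
    (if (i : ℕ) = (v : ℕ) - 4 then 1 else 0) + (if (i : ℕ) = (v : ℕ) - 3 then -2 else 0)
      + (if (i : ℕ) = (v : ℕ) - 2 then 1 else 0)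

/-- The variable of index `a` in `S = ℂ[x₁, x₂, x_{n-1}, y₀, y₁, …, y_{n-1}]`
(indices as in `wD`: `0 ↦ x₁`, `1 ↦ x₂`, `2 ↦ x_{n-1}`, `3+m ↦ y_m`). -/
noncomputable def vD (n : ℕ) (a : ℕ) : MvPolynomial (Fin (n + 3)) ℂ :=
  MvPolynomial.X ⟨a % (n + 3), Nat.mod_lt a (by omega)⟩

/-- The invariant monomial `Z₁ = x₁² y₀^{2k-2} y₁^k y₂^{k-1} ∏_{j=3}^{2k-1} y_j^{2k-j}`. -/
noncomputable def DZ₁ (k : ℕ) : MvPolynomial (Fin (2 * k + 3)) ℂ :=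
  vD (2 * k) 0 ^ 2 * vD (2 * k) 3 ^ (2 * k - 2) * vD (2 * k) 4 ^ k * vD (2 * k) 5 ^ (k - 1) *
    ∏ j ∈ Finset.Icc 3 (2 * k - 1), vD (2 * k) (j + 3) ^ (2 * k - j)

/-- The invariant monomial `Z₂ = x₂² y₀^{2k-2} y₁^{k-1} y₂^k ∏_{j=3}^{2k-1} y_j^{2k-j}`. -/
noncomputable def DZ₂ (k : ℕ) : MvPolynomial (Fin (2 * k + 3)) ℂ :=
  vD (2 * k) 1 ^ 2 * vD (2 * k) 3 ^ (2 * k - 2) * vD (2 * k) 4 ^ (k - 1) * vD (2 * k) 5 ^ k *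
    ∏ j ∈ Finset.Icc 3 (2 * k - 1), vD (2 * k) (j + 3) ^ (2 * k - j)

/-- The invariant monomial `Z₃ = x_{2k-1}² y₀² y₁ y₂ ∏_{j=3}^{2k-1} y_j²`. -/
noncomputable def DZ₃ (k : ℕ) : MvPolynomial (Fin (2 * k + 3)) ℂ :=
  vD (2 * k) 2 ^ 2 * vD (2 * k) 3 ^ 2 * vD (2 * k) 4 * vD (2 * k) 5 *
    ∏ j ∈ Finset.Icc 3 (2 * k - 1), vD (2 * k) (j + 3) ^ 2

/-- The invariant monomial `W = x₁ x₂ x_{2k-1} y₀^{2k-1} y₁^k y₂^k ∏_{j=3}^{2k-1} y_j^{2k+1-j}`. -/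
noncomputable def DW (k : ℕ) : MvPolynomial (Fin (2 * k + 3)) ℂ :=
  vD (2 * k) 0 * vD (2 * k) 1 * vD (2 * k) 2 * vD (2 * k) 3 ^ (2 * k - 1) * vD (2 * k) 4 ^ k *
      vD (2 * k) 5 ^ k *
    ∏ j ∈ Finset.Icc 3 (2 * k - 1), vD (2 * k) (j + 3) ^ (2 * k + 1 - j)


/-!
A monomial is invariant exactly when its exponent vector lies in the kernel of the weight
map, so the theorem says that this kernel, a submonoid of `ℕ^{n+3}`, is generated by the
exponent vectors of `Z₁, Z₂, Z₃, W`. Write `a, b, c` for the exponents of `x₁`, `x₂`,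
`x_{n-1}`. The weight equations say that along the chain `y₀ - y₃ - ⋯ - y_{n-1} - x_{n-1}` the
exponents form an arithmetic progression ending at `c`, and that `2 y₁ = a + y₀` and
`2 y₂ = b + y₀`; together these force the common difference to be `(a + b) / 2`. So an
invariant exponent vector is determined by `(a, b, c)`. For `n = 2k` integrality forces
`a ≡ b ≡ c (mod 2)`, and writing `a = 2p + s`, `b = 2q + s`, `c = 2r + s` with `s < 2`
identifies it with the exponent vector of `Z₁^p Z₂^q Z₃^r W^s`.
-/

section Weight

variable {m n : ℕ}

def weight (w : Fin m → Fin n → ℤ) : (Fin m →₀ ℕ) →+ (Fin n → ℤ) where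
  toFun d i := ∑ v, (d v : ℤ) * w v i
  map_zero' := by ext; simp
  map_add' d e := by ext; simp [add_mul, Finset.sum_add_distrib]

theorem weight_apply (w : Fin m → Fin n → ℤ) (d : Fin m →₀ ℕ) (i : Fin n) :
    weight w d i = ∑ v, (d v : ℤ) * w v i := rfl

theorem mem_invariants_iff {w : Fin m → Fin n → ℤ} {p : MvPolynomial (Fin m) ℂ} :
    p ∈ invariants w ↔ ∀ d ∈ p.support, weight w d = 0 := by
  simp only [funext_iff]
  rfl

theorem invariants_eq_adjoin_monomial {w : Fin m → Fin n → ℤ} {G : Set (Fin m →₀ ℕ)}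
    (hG : AddSubmonoid.closure G = AddMonoidHom.mker (weight w)) :
    invariants w = Algebra.adjoin ℂ ((fun g ↦ monomial g (1 : ℂ)) '' G) := by
  apply le_antisymm
  · intro p hp
    have hmono : ∀ d ∈ AddSubmonoid.closure G,
        monomial d (1 : ℂ) ∈ Algebra.adjoin ℂ ((fun g ↦ monomial g (1 : ℂ)) '' G) := by
      intro d hd
      induction hd using AddSubmonoid.closure_induction with
      | mem g hg => exact Algebra.subset_adjoin ⟨g, hg, rfl⟩
      | zero => exact one_mem _
      | add d e _ _ hd he => simpa [monomial_mul] using mul_mem hd he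
    rw [p.as_sum]
    refine Subalgebra.sum_mem _ fun d hd ↦ ?_
    rw [← mul_one (coeff d p), ← smul_eq_mul, ← smul_monomial]
    exact Subalgebra.smul_mem _ (hmono d (hG ▸ mem_invariants_iff.1 hp d hd)) _
  · rw [Algebra.adjoin_le_iff]
    rintro _ ⟨g, hg, rfl⟩
    rw [SetLike.mem_coe, mem_invariants_iff]
    intro d hd
    rw [Finset.mem_singleton.1 (support_monomial_subset hd)]
    exact AddMonoidHom.mem_mker.1 (hG ▸ AddSubmonoid.subset_closure hg)

end Weight

/-- The exponent of the variable of index `a`, read as `0` when `a` is out of range. -/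
def expAt {N : ℕ} (d : Fin N →₀ ℕ) (a : ℕ) : ℤ := if h : a < N then d ⟨a, h⟩ else 0

theorem expAt_val {N : ℕ} (d : Fin N →₀ ℕ) (v : Fin N) : expAt d v = d v := by
  simp [expAt]

theorem sum_mul_ite_val_eq {N : ℕ} (d : Fin N →₀ ℕ) (a : ℕ) (c : ℤ) :
    ∑ v : Fin N, (d v : ℤ) * (if (v : ℕ) = a then c else 0) = c * expAt d a := by
  unfold expAt
  split_ifs with ha
  · rw [Finset.sum_eq_single_of_mem ⟨a, ha⟩ (Finset.mem_univ _)]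
    · simp [mul_comm]
    · intro v _ hv
      simp [Fin.ext_iff.not.1 hv]
  · rw [mul_zero]
    refine Finset.sum_eq_zero fun v _ ↦ ?_
    simp [show (v : ℕ) ≠ a by omega]

theorem eq_add_mul_of_add_eq_two_mul {f : ℕ → ℤ} {N : ℕ}
    (h : ∀ j, j + 2 ≤ N → f j + f (j + 2) = 2 * f (j + 1)) :
    ∀ j ≤ N, f j = f 0 + j * (f 1 - f 0)
  | 0, _ => by simp
  | 1, _ => by simp
  | j + 2, hj => by
    have := h j hj
    rw [eq_add_mul_of_add_eq_two_mul h j (by omega),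
      eq_add_mul_of_add_eq_two_mul h (j + 1) (by omega)] at this
    push_cast at this ⊢
    linear_combination this

/-- `chainVar n m` is the index of `y_m` for `3 ≤ m < n`, extended to the chain
`y₀ - y₃ - ⋯ - y_{n-1} - x_{n-1}` by `y₀` at `m = 2` and `x_{n-1}` at `m = n`. -/
def chainVar (n m : ℕ) : ℕ := if m = 2 then 3 else if m = n then 2 else m + 3

theorem chainVar_two (n : ℕ) : chainVar n 2 = 3 := rfl

theorem chainVar_three {n : ℕ} (hn : n ≠ 3) : chainVar n 3 = 6 := by
  unfold chainVar; split_ifs <;> omega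

theorem chainVar_self {n : ℕ} (hn : n ≠ 2) : chainVar n n = 2 := by
  unfold chainVar; split_ifs <;> omega

theorem chainVar_lt {n m : ℕ} (hm : m ≤ n) : chainVar n m < n + 3 := by
  unfold chainVar; split_ifs <;> omega

theorem exists_chainVar_eq {n a : ℕ} (hn : 4 ≤ n) (ha : a < n + 3) (h0 : a ≠ 0) (h1 : a ≠ 1)
    (h4 : a ≠ 4) (h5 : a ≠ 5) : ∃ m, 2 ≤ m ∧ m ≤ n ∧ chainVar n m = a := by
  rcases (by omega : a = 2 ∨ a = 3 ∨ 6 ≤ a) with rfl | rfl | h6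
  · exact ⟨n, by omega, le_rfl, chainVar_self (by omega)⟩
  · exact ⟨2, le_rfl, by omega, chainVar_two n⟩
  · exact ⟨a - 3, by omega, by omega, by unfold chainVar; split_ifs <;> omega⟩

section WeightD

variable {n : ℕ}

theorem wD_of_seven_le {a : ℕ} (ha : a < n + 3) (h : 7 ≤ a) (i : Fin n) :
    wD n ⟨a, ha⟩ i = (if (i : ℕ) = a - 4 then 1 else 0)
      + (if (i : ℕ) = a - 3 then -2 else 0) + (if (i : ℕ) = a - 2 then 1 else 0) := by
  simp only [wD, show a ≠ 0 by omega, show a ≠ 1 by omega, show a ≠ 2 by omega,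
    show a ≠ 3 by omega, show a ≠ 4 by omega, show a ≠ 5 by omega, show a ≠ 6 by omega,
    if_false]

theorem wD_apply_of_eq_zero (hn : 4 ≤ n) (v : Fin (n + 3)) (i : Fin n) (hi : (i : ℕ) = 0) :
    wD n v i = (if (v : ℕ) = 4 then 1 else 0) + (if (v : ℕ) = 5 then 1 else 0)
      + (if (v : ℕ) = 6 then 1 else 0) + (if (v : ℕ) = 3 then -2 else 0) := by
  obtain ⟨a, ha⟩ := v
  rcases lt_or_ge a 7 with h | h
  · simp only [wD, hi]
    interval_cases a <;> simp
    omega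
  · rw [wD_of_seven_le ha h]
    dsimp only
    split_ifs <;> omega

theorem wD_apply_of_eq_one (hn : 4 ≤ n) (v : Fin (n + 3)) (i : Fin n) (hi : (i : ℕ) = 1) :
    wD n v i = (if (v : ℕ) = 0 then 1 else 0) + (if (v : ℕ) = 3 then 1 else 0)
      + (if (v : ℕ) = 4 then -2 else 0) := by
  obtain ⟨a, ha⟩ := v
  rcases lt_or_ge a 7 with h | h
  · simp only [wD, hi]
    interval_cases a <;> simp
    omega
  · rw [wD_of_seven_le ha h]
    dsimp only
    split_ifs <;> omega

theorem wD_apply_of_eq_two (hn : 4 ≤ n) (v : Fin (n + 3)) (i : Fin n) (hi : (i : ℕ) = 2) :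
    wD n v i = (if (v : ℕ) = 1 then 1 else 0) + (if (v : ℕ) = 3 then 1 else 0)
      + (if (v : ℕ) = 5 then -2 else 0) := by
  obtain ⟨a, ha⟩ := v
  rcases lt_or_ge a 7 with h | h
  · simp only [wD, hi]
    interval_cases a <;> simp
    omega
  · rw [wD_of_seven_le ha h]
    dsimp only
    split_ifs <;> omega

theorem wD_apply_of_three_le (v : Fin (n + 3)) (i : Fin n) (hi : 3 ≤ (i : ℕ)) :
    wD n v i = (if (v : ℕ) = chainVar n (i - 1) then 1 else 0)
      + (if (v : ℕ) = chainVar n (i + 1) then 1 else 0)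
      + (if (v : ℕ) = chainVar n i then -2 else 0) := by
  obtain ⟨a, ha⟩ := v
  obtain ⟨i, hin⟩ := i
  simp only at hi ⊢
  rw [show chainVar n (i - 1) = if i = 3 then 3 else i + 2 by unfold chainVar; split_ifs <;> omega,
    show chainVar n (i + 1) = if i + 1 = n then 2 else i + 4 by
      unfold chainVar; split_ifs <;> omega,
    show chainVar n i = i + 3 by unfold chainVar; split_ifs <;> omega]
  rcases lt_or_ge a 7 with h | h
  · simp only [wD]
    interval_cases a <;> simp <;> split_ifs <;> first | omega | contradiction
  · rw [wD_of_seven_le ha h]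
    dsimp only
    split_ifs <;> omega

theorem weight_wD_apply (hn : 4 ≤ n) (d : Fin (n + 3) →₀ ℕ) (i : Fin n) :
    weight (wD n) d i =
      if (i : ℕ) = 0 then expAt d 4 + expAt d 5 + expAt d 6 - 2 * expAt d 3
      else if (i : ℕ) = 1 then expAt d 0 + expAt d 3 - 2 * expAt d 4
      else if (i : ℕ) = 2 then expAt d 1 + expAt d 3 - 2 * expAt d 5
      else expAt d (chainVar n (i - 1)) + expAt d (chainVar n (i + 1))
        - 2 * expAt d (chainVar n i) := by
  rw [weight_apply]
  split_ifs <;>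
  simp (disch := omega) only [wD_apply_of_eq_zero hn, wD_apply_of_eq_one hn,
    wD_apply_of_eq_two hn, wD_apply_of_three_le, mul_add, Finset.sum_add_distrib,
    sum_mul_ite_val_eq] <;>
  ring

theorem weight_wD_eq_zero_iff (hn : 4 ≤ n) (d : Fin (n + 3) →₀ ℕ) :
    weight (wD n) d = 0 ↔
      expAt d 4 + expAt d 5 + expAt d 6 = 2 * expAt d 3 ∧
      expAt d 0 + expAt d 3 = 2 * expAt d 4 ∧
      expAt d 1 + expAt d 3 = 2 * expAt d 5 ∧
      ∀ m, 3 ≤ m → m < n →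
        expAt d (chainVar n (m - 1)) + expAt d (chainVar n (m + 1)) =
          2 * expAt d (chainVar n m) := by
  simp only [funext_iff, Pi.zero_apply, weight_wD_apply hn]
  constructor
  · intro h
    refine ⟨?_, ?_, ?_, fun m hm3 hmn ↦ ?_⟩
    · simpa [sub_eq_zero] using h ⟨0, by omega⟩
    · simpa [sub_eq_zero] using h ⟨1, by omega⟩
    · simpa [sub_eq_zero] using h ⟨2, by omega⟩
    · have hm := h ⟨m, hmn⟩
      simp only [show m ≠ 0 by omega, show m ≠ 1 by omega, show m ≠ 2 by omega, if_false]
        at hm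
      linarith
  · rintro ⟨h0, h1, h2, hc⟩ i
    split_ifs
    · linarith
    · linarith
    · linarith
    · linarith [hc i (by omega) i.isLt]

theorem two_mul_expAt_chainVar (hn : 4 ≤ n) {d : Fin (n + 3) →₀ ℕ}
    (hd : weight (wD n) d = 0) {m : ℕ} (hm2 : 2 ≤ m) (hmn : m ≤ n) :
    2 * expAt d (chainVar n m) = 2 * expAt d 2 + (n - m : ℤ) * (expAt d 0 + expAt d 1) := by
  obtain ⟨h0, h1, h2, hc⟩ := (weight_wD_eq_zero_iff hn d).1 hd
  -- read from the `x_{n-1}` end, the chain exponents form an arithmetic progression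
  have hap := eq_add_mul_of_add_eq_two_mul (f := fun j ↦ expAt d (chainVar n (n - j)))
    (N := n - 2) fun j hj ↦ by
      have := hc (n - (j + 1)) (by omega) (by omega)
      rwa [show n - (j + 1) - 1 = n - (j + 2) by omega, show n - (j + 1) + 1 = n - j by omega,
        add_comm] at this
  have hu2 := hap (n - 2) le_rfl
  have hu3 := hap (n - 3) (by omega)
  have hum := hap (n - m) (by omega)
  simp only [Nat.sub_sub_self (by omega : 2 ≤ n), Nat.sub_sub_self (by omega : 3 ≤ n),
    Nat.sub_sub_self hmn, Nat.sub_zero, chainVar_two, chainVar_three (show n ≠ 3 by omega),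
    chainVar_self (show n ≠ 2 by omega)] at hu2 hu3 hum
  push_cast [Nat.cast_sub (by omega : 2 ≤ n), Nat.cast_sub (by omega : 3 ≤ n),
    Nat.cast_sub hmn] at hu2 hu3 hum
  linear_combination 2 * hum - (n - m : ℤ) * (h1 + h2 + 2 * h0) - 2 * (n - m : ℤ) * (hu2 - hu3)

theorem eq_of_weight_wD_eq_zero (hn : 4 ≤ n) {d d' : Fin (n + 3) →₀ ℕ}
    (hd : weight (wD n) d = 0) (hd' : weight (wD n) d' = 0) (h0 : expAt d 0 = expAt d' 0)
    (h1 : expAt d 1 = expAt d' 1) (h2 : expAt d 2 = expAt d' 2) : d = d' := by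
  have hchain : ∀ m, 2 ≤ m → m ≤ n →
      expAt d (chainVar n m) = expAt d' (chainVar n m) := by
    intro m hm2 hmn
    have h := two_mul_expAt_chainVar hn hd hm2 hmn
    have h' := two_mul_expAt_chainVar hn hd' hm2 hmn
    rw [h0, h1, h2] at h
    linarith
  have h3 : expAt d 3 = expAt d' 3 := hchain 2 le_rfl (by omega)
  obtain ⟨-, h4, h5, -⟩ := (weight_wD_eq_zero_iff hn d).1 hd
  obtain ⟨-, h4', h5', -⟩ := (weight_wD_eq_zero_iff hn d').1 hd'
  ext v
  suffices expAt d v = expAt d' v by simpa [expAt_val] using this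
  by_cases hv : (v : ℕ) = 0 ∨ (v : ℕ) = 1 ∨ (v : ℕ) = 4 ∨ (v : ℕ) = 5
  · rcases hv with hv | hv | hv | hv <;> rw [hv] <;> linarith
  · simp only [not_or] at hv
    obtain ⟨m, hm2, hmn, hm⟩ := exists_chainVar_eq hn v.isLt hv.1 hv.2.1 hv.2.2.1 hv.2.2.2
    rw [← hm]
    exact hchain m hm2 hmn

end WeightD

theorem vD_eq_X (n : ℕ) (v : Fin (n + 3)) : vD n v = X v :=
  congrArg X (Fin.ext (Nat.mod_eq_of_lt v.isLt))

theorem prod_range_vD_pow (n : ℕ) (f : ℕ → ℕ) :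
    ∏ a ∈ Finset.range (n + 3), vD n a ^ f a =
      monomial (Finsupp.equivFunOnFinite.symm fun v : Fin (n + 3) ↦ f v) 1 := by
  rw [monomial_eq, C_1, one_mul, Finsupp.prod_fintype _ _ fun _ ↦ pow_zero _,
    ← Fin.prod_univ_eq_prod_range fun a ↦ vD n a ^ f a]
  simp [vD_eq_X]

/-- The exponent of the variable of index `a` (numbered as in `vD`) in
`Z₁^p Z₂^q Z₃^r W^s`. -/
def expD (k p q r s : ℕ) : ℕ → ℕ
  | 0 => 2 * p + s
  | 1 => 2 * q + s
  | 2 => 2 * r + s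
  | 3 => 2 * r + s + (2 * k - 2) * (p + q + s)
  | 4 => (k - 1) * (p + q + s) + p + r + s
  | 5 => (k - 1) * (p + q + s) + q + r + s
  | m + 3 => 2 * r + s + (2 * k - m) * (p + q + s)

noncomputable def expVecD (k p q r s : ℕ) : Fin (2 * k + 3) →₀ ℕ :=
  Finsupp.equivFunOnFinite.symm fun v ↦ expD k p q r s v

section Generators

variable {k : ℕ}

theorem expVecD_apply (p q r s : ℕ) (v : Fin (2 * k + 3)) :
    expVecD k p q r s v = expD k p q r s v := rfl

theorem expAt_expVecD {a : ℕ} (p q r s : ℕ) (ha : a < 2 * k + 3) :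
    expAt (expVecD k p q r s) a = expD k p q r s a := by
  simp [expAt, ha, expVecD_apply]

theorem expD_chainVar {m : ℕ} (p q r s : ℕ) (hm2 : 2 ≤ m) (hmk : m ≤ 2 * k) :
    expD k p q r s (chainVar (2 * k) m) = 2 * r + s + (2 * k - m) * (p + q + s) := by
  unfold chainVar
  split_ifs with h2 hk
  · subst h2; rfl
  · subst hk; simp [expD]
  · obtain ⟨j, rfl⟩ : ∃ j, m = j + 3 := ⟨m - 3, by omega⟩
    rfl

theorem expVecD_eq_add (p q r s : ℕ) :
    expVecD k p q r s = p • expVecD k 1 0 0 0 + q • expVecD k 0 1 0 0 + r • expVecD k 0 0 1 0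
      + s • expVecD k 0 0 0 1 := by
  ext ⟨a, ha⟩
  simp only [Finsupp.coe_add, Finsupp.coe_smul, Pi.add_apply, Pi.smul_apply, expVecD_apply,
    smul_eq_mul]
  rcases a with _ | _ | _ | _ | _ | _ | a <;> simp only [expD] <;> ring

theorem monomial_expVecD (hk : 2 ≤ k) (p q r s : ℕ) :
    monomial (expVecD k p q r s) (1 : ℂ) =
      vD (2 * k) 0 ^ (2 * p + s) * vD (2 * k) 1 ^ (2 * q + s) * vD (2 * k) 2 ^ (2 * r + s) *
        vD (2 * k) 3 ^ (2 * r + s + (2 * k - 2) * (p + q + s)) *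
        vD (2 * k) 4 ^ ((k - 1) * (p + q + s) + p + r + s) *
        vD (2 * k) 5 ^ ((k - 1) * (p + q + s) + q + r + s) *
        ∏ j ∈ Finset.Icc 3 (2 * k - 1),
          vD (2 * k) (j + 3) ^ (2 * r + s + (2 * k - j) * (p + q + s)) := by
  rw [expVecD, ← prod_range_vD_pow,
    show Finset.range (2 * k + 3) = Finset.range (6 + (2 * k - 3)) by congr 1; omega,
    Finset.prod_range_add, ← Finset.Ico_add_one_right_eq_Icc, Finset.prod_Ico_eq_prod_range,
    show 2 * k - 1 + 1 - 3 = 2 * k - 3 by omega]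
  simp only [Finset.prod_range_succ, Finset.prod_range_zero, one_mul]
  congr 1
  refine Finset.prod_congr rfl fun j _ ↦ ?_
  rw [show 6 + j = j + 3 + 3 by omega, add_comm 3 j]
  rfl

theorem DZ₁_eq_monomial (hk : 2 ≤ k) : DZ₁ k = monomial (expVecD k 1 0 0 0) 1 := by
  rw [monomial_expVecD hk, DZ₁]
  simp only [mul_zero, mul_one, add_zero, zero_add, pow_zero,
    Nat.sub_add_cancel (by omega : 1 ≤ k)]

theorem DZ₂_eq_monomial (hk : 2 ≤ k) : DZ₂ k = monomial (expVecD k 0 1 0 0) 1 := by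
  rw [monomial_expVecD hk, DZ₂]
  simp only [mul_zero, mul_one, add_zero, zero_add, pow_zero, one_mul,
    Nat.sub_add_cancel (by omega : 1 ≤ k)]

theorem DZ₃_eq_monomial (hk : 2 ≤ k) : DZ₃ k = monomial (expVecD k 0 0 1 0) 1 := by
  rw [monomial_expVecD hk, DZ₃]
  simp only [mul_zero, mul_one, add_zero, zero_add, pow_zero, one_mul, pow_one]

theorem DW_eq_monomial (hk : 2 ≤ k) : DW k = monomial (expVecD k 0 0 0 1) 1 := by
  rw [monomial_expVecD hk, DW]
  simp only [mul_zero, mul_one, add_zero, zero_add, pow_one,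
    Nat.sub_add_cancel (by omega : 1 ≤ k), show 1 + (2 * k - 2) = 2 * k - 1 by omega]
  refine congrArg _ (Finset.prod_congr rfl fun j hj ↦ ?_)
  rw [show 1 + (2 * k - j) = 2 * k + 1 - j by grind]

theorem weight_expVecD (hk : 2 ≤ k) (p q r s : ℕ) :
    weight (wD (2 * k)) (expVecD k p q r s) = 0 := by
  have hchain : ∀ m, 2 ≤ m → m ≤ 2 * k → expAt (expVecD k p q r s) (chainVar (2 * k) m) =
      2 * r + s + ((2 * k - m : ℕ) : ℤ) * (p + q + s) := fun m hm2 hmk ↦ by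
    rw [expAt_expVecD _ _ _ _ (chainVar_lt hmk), expD_chainVar _ _ _ _ hm2 hmk]
    push_cast
    ring
  have h3 := hchain 2 le_rfl (by omega)
  have h6 := hchain 3 (by omega) (by omega)
  rw [chainVar_two] at h3
  rw [chainVar_three (show 2 * k ≠ 3 by omega)] at h6
  rw [weight_wD_eq_zero_iff (by omega)]
  simp only [expAt_expVecD _ _ _ _ (show 0 < 2 * k + 3 by omega),
    expAt_expVecD _ _ _ _ (show 1 < 2 * k + 3 by omega),
    expAt_expVecD _ _ _ _ (show 4 < 2 * k + 3 by omega),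
    expAt_expVecD _ _ _ _ (show 5 < 2 * k + 3 by omega), h3, h6]
  obtain ⟨j, rfl⟩ : ∃ j, k = j + 2 := ⟨k - 2, by omega⟩
  have hy0 : 2 * (j + 2) - 2 = 2 * j + 2 := by omega
  have hy3 : 2 * (j + 2) - 3 = 2 * j + 1 := by omega
  refine ⟨?_, ?_, ?_, fun m hm3 hmn ↦ ?_⟩
  · simp only [expD, hy0, hy3]
    push_cast
    ring
  · simp only [expD, hy0]
    push_cast
    ring
  · simp only [expD, hy0]
    push_cast
    ring
  · rw [hchain _ (by omega) (by omega), hchain _ (by omega) (by omega),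
      hchain _ (by omega) (by omega),
      show 2 * (j + 2) - (m - 1) = 2 * (j + 2) - (m + 1) + 2 by omega,
      show 2 * (j + 2) - m = 2 * (j + 2) - (m + 1) + 1 by omega]
    push_cast
    ring

theorem exists_eq_expVecD (hk : 2 ≤ k) {d : Fin (2 * k + 3) →₀ ℕ}
    (hd : weight (wD (2 * k)) d = 0) : ∃ p q r s, d = expVecD k p q r s := by
  have hn : 4 ≤ 2 * k := by omega
  obtain ⟨-, h4, -, -⟩ := (weight_wD_eq_zero_iff hn d).1 hd
  have hy0 := two_mul_expAt_chainVar hn hd le_rfl (by omega)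
  have hlast := two_mul_expAt_chainVar hn hd (m := 2 * k - 1) (by omega) (by omega)
  rw [chainVar_two] at hy0
  push_cast [Nat.cast_sub (by omega : 1 ≤ 2 * k)] at hy0 hlast
  obtain ⟨w₁, hw₁⟩ : ∃ w : ℤ, expAt d 0 + expAt d 1 = 2 * w :=
    ⟨expAt d (chainVar (2 * k) (2 * k - 1)) - expAt d 2, by linear_combination -hlast⟩
  have hy0' : expAt d 3 = expAt d 2 + (k - 1) * (expAt d 0 + expAt d 1) := by linarith
  obtain ⟨w₂, hw₂⟩ : ∃ w : ℤ, expAt d 0 + expAt d 2 = 2 * w :=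
    ⟨expAt d 4 - (k - 1) * w₁, by linear_combination h4 - hy0' - (k - 1) * hw₁⟩
  have h0 : expAt d 0 = d ⟨0, by omega⟩ := expAt_val d ⟨0, by omega⟩
  have h1 : expAt d 1 = d ⟨1, by omega⟩ := expAt_val d ⟨1, by omega⟩
  have h2 : expAt d 2 = d ⟨2, by omega⟩ := expAt_val d ⟨2, by omega⟩
  refine ⟨d ⟨0, by omega⟩ / 2, d ⟨1, by omega⟩ / 2, d ⟨2, by omega⟩ / 2,
    d ⟨0, by omega⟩ % 2,
    eq_of_weight_wD_eq_zero hn hd (weight_expVecD hk _ _ _ _) ?_ ?_ ?_⟩ <;>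
  rw [expAt_expVecD _ _ _ _ (by omega)] <;>
  simp only [expD] <;>
  omega

theorem closure_expVecD_eq_mker (hk : 2 ≤ k) :
    AddSubmonoid.closure
        {expVecD k 1 0 0 0, expVecD k 0 1 0 0, expVecD k 0 0 1 0, expVecD k 0 0 0 1} =
      AddMonoidHom.mker (weight (wD (2 * k))) := by
  apply le_antisymm
  · rw [AddSubmonoid.closure_le]
    rintro _ (rfl | rfl | rfl | rfl) <;> exact weight_expVecD hk _ _ _ _
  · intro d hd
    obtain ⟨p, q, r, s, rfl⟩ := exists_eq_expVecD hk hd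
    rw [expVecD_eq_add p q r s]
    refine add_mem (add_mem (add_mem ?_ ?_) ?_) ?_ <;>
    exact nsmul_mem (AddSubmonoid.subset_closure (by simp)) _

end Generators

/-- for `n = 2k` (`k ≥ 2`), the ring of invariants of the torus action on
`S = ℂ[x₁, x₂, x_{2k-1}, y₀, …, y_{2k-1}]` is generated, as a `ℂ`-subalgebra, by the
four monomials `Z₁`, `Z₂`, `Z₃`, `W`. -/
theorem statement3 (k : ℕ) (hk : 2 ≤ k) :
    invariants (wD (2 * k)) = Algebra.adjoin ℂ {DZ₁ k, DZ₂ k, DZ₃ k, DW k} := by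
  rw [invariants_eq_adjoin_monomial (closure_expVecD_eq_mker hk)]
  simp only [Set.image_insert_eq, Set.image_singleton, DZ₁_eq_monomial hk, DZ₂_eq_monomial hk,
    DZ₃_eq_monomial hk, DW_eq_monomial hk]
end
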